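/- arXiv:2107.13789 — 3 statements merged into one kernel-verified Lean document; each statement's English description precedes it below -/
import Mathlib

section
/- If the prism G □ K₂ over a graph G has a Hamilton cycle, then G has a 2-walk (a spanning closed walk visiting every vertex at most twice). -/
open SimpleGraph

variable {V : Type*}

/-- Two edges are in the same block iff they are equal or lie on a common cycle. -/
def SameBlock (G : SimpleGraph V) (e f : Sym2 V) : Prop :=
  e = f ∨ ∃ (u : V) (c : G.Walk u u), c.IsCycle ∧ e ∈ c.edges ∧ f ∈ c.edges

/-- A block of `G`, identified with its edge set: an equivalence class of `SameBlock`. -/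
def IsBlock (G : SimpleGraph V) (C : Set (Sym2 V)) : Prop :=
  ∃ e ∈ G.edgeSet, C = {f ∈ G.edgeSet | SameBlock G e f}

/-- The block degree of `v`: the number of blocks containing `v`. -/
noncomputable def blockDegree (G : SimpleGraph V) (v : V) : ℕ :=
  {C : Set (Sym2 V) | IsBlock G C ∧ ∃ e ∈ C, v ∈ e}.ncard

/-- A block that is a single edge (a bridge). -/
def BlockIsEdge (C : Set (Sym2 V)) : Prop := ∃ e, C = {e}

/-- A block that is a cycle. -/
def BlockIsCycle (G : SimpleGraph V) (C : Set (Sym2 V)) : Prop :=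
  ∃ (u : V) (c : G.Walk u u), c.IsCycle ∧ C = {e | e ∈ c.edges}

/-- A cactus: a connected graph each of whose blocks is an edge or a cycle. -/
def IsCactus (G : SimpleGraph V) : Prop :=
  G.Connected ∧ ∀ C, IsBlock G C → BlockIsEdge C ∨ BlockIsCycle G C

/-- An even cactus: a cactus in which every cycle (block) is even. -/
def IsEvenCactus (G : SimpleGraph V) : Prop :=
  IsCactus G ∧ ∀ (u : V) (c : G.Walk u u), c.IsCycle → Even c.length

/-- A good cactus: every vertex lies in at most two blocks. -/
def IsGoodCactus (G : SimpleGraph V) : Prop :=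
  IsCactus G ∧ ∀ v, blockDegree G v ≤ 2

/-- A good even cactus. -/
def IsGoodEvenCactus (G : SimpleGraph V) : Prop :=
  IsEvenCactus G ∧ ∀ v, blockDegree G v ≤ 2

/-- An edge path: a path each of whose edges is itself a block. -/
def IsEdgePath {G : SimpleGraph V} {a b : V} (P : G.Walk a b) : Prop :=
  P.IsPath ∧ ∀ e ∈ P.edges, IsBlock G {e}

/-- `v` is an internal vertex of the path `P`. -/
def Internal {G : SimpleGraph V} {a b : V} (P : G.Walk a b) (v : V) : Prop :=
  v ∈ P.support ∧ v ≠ a ∧ v ≠ b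

/-- A 1-good cactus: `P`-good for some edge path `P`. -/
def Is1Good (G : SimpleGraph V) : Prop :=
  IsCactus G ∧ ∃ (a b : V) (P : G.Walk a b), IsEdgePath P ∧
    ∀ v, (¬ Internal P v → blockDegree G v ≤ 2) ∧ (Internal P v → blockDegree G v ≤ 3)

/-- A 2-good cactus: `{P₁, P₂}`-good for some edge paths sharing at most one vertex. -/
def Is2Good (G : SimpleGraph V) : Prop :=
  IsCactus G ∧ ∃ (a b c d : V) (P₁ : G.Walk a b) (P₂ : G.Walk c d),
    IsEdgePath P₁ ∧ IsEdgePath P₂ ∧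
    {v | v ∈ P₁.support ∧ v ∈ P₂.support}.ncard ≤ 1 ∧
    ∀ v, (¬ Internal P₁ v ∧ ¬ Internal P₂ v → blockDegree G v ≤ 2) ∧
      ((Internal P₁ v ∧ ¬ Internal P₂ v) ∨ (¬ Internal P₁ v ∧ Internal P₂ v) →
        blockDegree G v ≤ 3) ∧
      (Internal P₁ v ∧ Internal P₂ v → blockDegree G v = 4)

/-- The prism over `G`: the Cartesian product `G □ K₂`. -/
def prism (G : SimpleGraph V) : SimpleGraph (V × Fin 2) :=
  G.boxProd (⊤ : SimpleGraph (Fin 2))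

/-- `G □ K₂` has a Hamilton cycle. -/
def IsPrismHamiltonian (G : SimpleGraph V) [DecidableEq V] : Prop :=
  ∃ (x : V × Fin 2) (c : (prism G).Walk x x), c.IsHamiltonianCycle

/-- A closed walk is a `k`-walk if it visits every vertex at least once and at most `k` times. -/
def IsKWalk {G : SimpleGraph V} [DecidableEq V] {v : V} (w : G.Walk v v) (k : ℕ) : Prop :=
  ∀ u, 1 ≤ w.support.tail.count u ∧ w.support.tail.count u ≤ k

/-- `G` has a `k`-walk. -/
def HasKWalk (G : SimpleGraph V) [DecidableEq V] (k : ℕ) : Prop :=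
  ∃ (v : V) (w : G.Walk v v), IsKWalk w k

/-- Maximum degree at most `k`. -/
def MaxDegLE (G : SimpleGraph V) (k : ℕ) : Prop :=
  ∀ v, {u | G.Adj v u}.ncard ≤ k

/-- `T` is a `k`-tree of `G`: a spanning tree of maximum degree at most `k`. -/
def IsKTree (G T : SimpleGraph V) (k : ℕ) : Prop :=
  T ≤ G ∧ T.Connected ∧ T.IsAcyclic ∧ MaxDegLE T k

/-- `G` has a `k`-tree. -/
def HasKTree (G : SimpleGraph V) (k : ℕ) : Prop :=
  ∃ T : SimpleGraph V, IsKTree G T k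

/-- The graph obtained by deleting vertices `s` and `t`. -/
def delete2 (K : SimpleGraph V) (s t : V) : SimpleGraph {v : V // v ≠ s ∧ v ≠ t} :=
  K.induce {v : V | v ≠ s ∧ v ≠ t}

/-- The induced graph on a connected component. -/
def compGraph {W : Type*} (H : SimpleGraph W) (c : H.ConnectedComponent) :
    SimpleGraph c.supp :=
  H.induce c.supp

/-- The number of connected components. -/
noncomputable def numComponents {W : Type*} (H : SimpleGraph W) : ℕ :=
  (Set.univ : Set H.ConnectedComponent).ncard

/-!
Projecting a Hamilton cycle of `G □ H` to `G` (dropping the `H`-moves) gives a closed walk of `G`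
through every vertex, and the projection visits `a` at most as often as the cycle visits the
fibre `{a} × β`, that is at most `|β|` times. For `H = K₂` this is a 2-walk, provided the
projection is not trivial, which holds because a cycle inside a single fibre has at most two
vertices.
-/

theorem List.Nodup.count_map_fst_le {α β : Type*} [DecidableEq α] [Fintype β]
    {l : List (α × β)} (hl : l.Nodup) (a : α) :
    (l.map Prod.fst).count a ≤ Fintype.card β := by
  rw [List.count, List.countP_map, List.countP_eq_length_filter,
    ← List.length_map (f := Prod.snd)]
  refine (List.Nodup.map_on ?_ (hl.filter _)).length_le_card
  intro z hz z' hz' hsnd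
  simp only [List.mem_filter, Function.comp, beq_iff_eq] at hz hz'
  exact Prod.ext (hz.2.trans hz'.2.symm) hsnd

namespace SimpleGraph.Walk

variable {α β : Type*} {G : SimpleGraph α} {H : SimpleGraph β}
  [DecidableEq β] [DecidableRel G.Adj]

theorem support_ofBoxProdLeft_sublist {x y : α × β} (w : (G □ H).Walk x y) :
    w.ofBoxProdLeft.support.Sublist (w.support.map Prod.fst) := by
  induction w with
  | nil => simp [ofBoxProdLeft]
  | @cons u v _ h w ih =>
    obtain ⟨u₁, u₂⟩ := u
    unfold ofBoxProdLeft Or.by_cases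
    split
    · simpa using ih
    next hG =>
      obtain ⟨-, rfl : u₁ = v.1⟩ := (boxProd_adj.mp h).resolve_left hG
      simpa using ih.cons _

theorem fst_mem_support_ofBoxProdLeft {x y : α × β} (w : (G □ H).Walk x y) {z : α × β}
    (hz : z ∈ w.support) : z.1 ∈ w.ofBoxProdLeft.support := by
  induction w with
  | nil => simp_all [ofBoxProdLeft]
  | @cons u v _ h w ih =>
    obtain ⟨u₁, u₂⟩ := u
    rw [support_cons, List.mem_cons] at hz
    unfold ofBoxProdLeft Or.by_cases
    split
    · rcases hz with rfl | hz
      · simp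
      · simpa using Or.inr (ih hz)
    next hG =>
      obtain ⟨-, rfl : u₁ = v.1⟩ := (boxProd_adj.mp h).resolve_left hG
      rcases hz with rfl | hz
      · exact start_mem_support _
      · exact ih hz

variable [DecidableEq α] [Fintype β] {x : α × β} {c : (G □ H).Walk x x}

theorem IsCycle.count_support_tail_ofBoxProdLeft_le (hc : c.IsCycle) (a : α) :
    c.ofBoxProdLeft.support.tail.count a ≤ Fintype.card β := by
  have hsub := c.support_ofBoxProdLeft_sublist.tail
  rw [← List.map_tail] at hsub
  exact (hsub.count_le a).trans (hc.support_nodup.count_map_fst_le a)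

theorem IsCycle.not_nil_ofBoxProdLeft (hc : c.IsCycle) (hlt : Fintype.card β < c.length) :
    ¬ c.ofBoxProdLeft.Nil := by
  intro hnil
  have hfst : ∀ a ∈ c.support.tail.map Prod.fst, x.1 = a := by
    intro a ha
    obtain ⟨z, hz, rfl⟩ := List.mem_map.mp ha
    simpa [nil_iff_support_eq.mp hnil, eq_comm] using
      c.fst_mem_support_ofBoxProdLeft (List.mem_of_mem_tail hz)
  have hcount : (c.support.tail.map Prod.fst).count x.1 = c.length := by
    rw [List.count_eq_length.mpr hfst, List.length_map, List.length_tail, length_support,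
      Nat.add_sub_cancel]
  have := hc.support_nodup.count_map_fst_le x.1
  omega

theorem IsHamiltonianCycle.isKWalk_ofBoxProdLeft (hc : c.IsHamiltonianCycle)
    (hlt : Fintype.card β < c.length) : IsKWalk c.ofBoxProdLeft (Fintype.card β) := by
  intro a
  have hmem : a ∈ c.ofBoxProdLeft.support :=
    c.fst_mem_support_ofBoxProdLeft (hc.mem_support (a, x.2))
  have hmem_tail : a ∈ c.ofBoxProdLeft.support.tail := by
    rcases (mem_support_iff _).mp hmem with rfl | h
    · exact end_mem_tail_support (hc.isCycle.not_nil_ofBoxProdLeft hlt)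
    · exact h
  exact ⟨List.count_pos_iff.mpr hmem_tail, hc.isCycle.count_support_tail_ofBoxProdLeft_le a⟩

end SimpleGraph.Walk

theorem prism_hamiltonian_implies_two_walk_general [DecidableEq V]
    (G : SimpleGraph V) (h : IsPrismHamiltonian G) :
    HasKWalk G 2 := by
  classical
  obtain ⟨x, c, hc⟩ := h
  have hlt : Fintype.card (Fin 2) < c.length := by
    rw [Fintype.card_fin]
    exact hc.isCycle.three_le_length
  exact ⟨x.1, c.ofBoxProdLeft, hc.isKWalk_ofBoxProdLeft hlt⟩

/-- a hamiltonian prism yields a 2-walk. -/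
theorem prism_hamiltonian_implies_two_walk [Fintype V] [DecidableEq V]
    (G : SimpleGraph V) (hG : G.Connected) (h : IsPrismHamiltonian G) :
    HasKWalk G 2 :=
  prism_hamiltonian_implies_two_walk_general G h
end

section
/- Every 2-walk in a graph G contains a spanning tree of G with maximum degree at most three; more generally, every k-walk contains a subgraph that is a (k+1)-tree. -/
/-!
Take the first-visit tree of the walk: every vertex other than the start is joined to the vertex
from which the walk first arrives at it. Parents are first visited strictly earlier than their
children, so this is a spanning tree, and all its edges are traversed by the walk. Besides its
parent, a vertex `x` is adjacent only to children, each entered by the walk directly from `x`;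
a closed walk leaves `x` exactly as often as it enters it, at most `k` times, so `deg x ≤ k + 1`.
-/

open SimpleGraph

variable {V : Type*}

namespace SimpleGraph

section ParentGraph

variable {p : V → V} {r : V → ℕ} {v : V}

variable (p) in
def parentGraph : SimpleGraph V := fromRel fun x y => p y = x

variable (p) in
lemma parentGraph_adj {x y : V} : (parentGraph p).Adj x y ↔ x ≠ y ∧ (p y = x ∨ p x = y) :=
  fromRel_adj ..

lemma parentGraph_reachable (hr : ∀ u ≠ v, r (p u) < r u) (u : V) :
    (parentGraph p).Reachable v u := by
  induction h : r u using Nat.strong_induction_on generalizing u with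
  | _ n ih =>
    by_cases hu : u = v
    · rw [hu]
    · have hlt := hr u hu
      have hadj : (parentGraph p).Adj (p u) u :=
        (parentGraph_adj p).2 ⟨fun h => by rw [h] at hlt; exact hlt.false, Or.inl rfl⟩
      exact (ih _ (h ▸ hlt) (p u) rfl).trans hadj.reachable

lemma parentGraph_connected (hr : ∀ u ≠ v, r (p u) < r u) : (parentGraph p).Connected :=
  have : Nonempty V := ⟨v⟩
  connected_iff_exists_forall_reachable _ |>.2 ⟨v, parentGraph_reachable hr⟩

/-- A vertex of maximal rank on a cycle would have both of its cycle-neighbours equal to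
its parent. -/
lemma parentGraph_isAcyclic (hr : ∀ u, p u ≠ u → r (p u) < r u) :
    (parentGraph p).IsAcyclic := by
  classical
  intro u c hc
  obtain ⟨m, hm, hmax⟩ := c.support.toFinset.exists_max_image r ⟨u, by simp⟩
  rw [List.mem_toFinset] at hm
  have hc' := hc.rotate hm
  have hnil : ¬ (c.rotate m hm).Nil := hc'.not_nil
  have eq_parent_of_adj :
      ∀ y ∈ (c.rotate m hm).support, (parentGraph p).Adj m y → y = p m := by
    intro y hy hadj
    obtain ⟨hmy, hym | rfl⟩ := (parentGraph_adj p).1 hadj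
    · have hle := hmax y (by simpa [Walk.mem_support_rotate_iff] using hy)
      have hlt := hr y (hym ▸ hmy)
      rw [hym] at hlt
      omega
    · rfl
  exact hc'.snd_ne_penultimate <|
    (eq_parent_of_adj _ (Walk.getVert_mem_support _ 1) (Walk.adj_snd hnil)).trans
      (eq_parent_of_adj _ (Walk.getVert_mem_support _ _) (Walk.adj_penultimate hnil).symm).symm

lemma maxDegLE_parentGraph {k : ℕ} (S : V → Finset V) (hS : ∀ y, p y ≠ y → y ∈ S (p y))
    (hk : ∀ x, (S x).card ≤ k) : MaxDegLE (parentGraph p) (k + 1) := by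
  intro x
  have hsub : {y | (parentGraph p).Adj x y} ⊆ insert (p x) (S x : Set V) := by
    rintro y ⟨hxy, rfl | rfl⟩
    · exact Set.mem_insert_of_mem _ (hS y hxy)
    · exact Set.mem_insert _ _
  calc {y | (parentGraph p).Adj x y}.ncard ≤ (insert (p x) (S x : Set V)).ncard :=
        Set.ncard_le_ncard hsub ((S x).finite_toSet.insert _)
    _ ≤ (S x).card + 1 := Set.ncard_coe_finset (S x) ▸ Set.ncard_insert_le _ _
    _ ≤ k + 1 := by gcongr; exact hk x

lemma parentGraph_edgeSet_subset {s : Set (Sym2 V)} (h : ∀ x, p x ≠ x → s(p x, x) ∈ s) :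
    (parentGraph p).edgeSet ⊆ s := by
  intro e he
  induction e using Sym2.ind with
  | h x y =>
    rw [mem_edgeSet, parentGraph_adj] at he
    obtain ⟨hxy, rfl | rfl⟩ := he
    · exact h y hxy
    · exact Sym2.eq_swap ▸ h x (Ne.symm hxy)

end ParentGraph

namespace Walk

variable [DecidableEq V] {G : SimpleGraph V} {u v x : V} (w : G.Walk u v)

def successors (x : V) : Finset V := ((w.darts.filter (·.fst = x)).map (·.snd)).toFinset

lemma mem_successors {x y : V} :
    y ∈ w.successors x ↔ ∃ d ∈ w.darts, d.fst = x ∧ d.snd = y := by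
  simp [successors, and_assoc]

lemma card_successors_le (x : V) : (w.successors x).card ≤ w.support.dropLast.count x :=
  calc (w.successors x).card ≤ (w.darts.filter (·.fst = x)).length :=
        (List.toFinset_card_le _).trans_eq (List.length_map _)
    _ = (w.darts.map (·.fst)).count x := by
        rw [List.count_eq_countP, List.countP_map, List.countP_eq_length_filter]; rfl
    _ = w.support.dropLast.count x := by rw [map_fst_darts]

lemma mk_mem_edges_of_mem_successors {x y : V} (h : y ∈ w.successors x) :
    s(x, y) ∈ w.edges := by
  obtain ⟨d, hd, rfl, rfl⟩ := w.mem_successors.1 h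
  exact List.mem_map_of_mem hd

/-- For `x = u` the index `0 - 1` truncates to `0`: the start is its own parent, the root. -/
def firstVisitParent (x : V) : V := w.getVert (w.support.idxOf x - 1)

lemma firstVisitParent_start : w.firstVisitParent u = u := by
  rw [firstVisitParent, ← w.cons_tail_support, List.idxOf_cons_self, Nat.zero_sub, getVert_zero]

lemma idxOf_pos_of_ne_start (hxu : x ≠ u) : 0 < w.support.idxOf x := by
  rw [Nat.pos_iff_ne_zero, Ne, List.idxOf_eq_zero_iff_head_eq w.support_ne_nil, head_support]
  exact hxu.symm

lemma idxOf_firstVisitParent_lt (hx : x ∈ w.support) (hxu : x ≠ u) :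
    w.support.idxOf (w.firstVisitParent x) < w.support.idxOf x := by
  have hpos := w.idxOf_pos_of_ne_start hxu
  have hlt := List.idxOf_lt_length_of_mem hx
  have := w.length_support
  rw [firstVisitParent, ← List.mem_take_iff_idxOf_lt (getVert_mem_support _ _),
    getVert_eq_support_getElem _ (by omega)]
  exact List.mem_take_iff_getElem.2 ⟨_, by omega, rfl⟩

lemma mem_successors_firstVisitParent (hx : x ∈ w.support) (hxu : x ≠ u) :
    x ∈ w.successors (w.firstVisitParent x) := by
  have hpos := w.idxOf_pos_of_ne_start hxu
  have hlt := List.idxOf_lt_length_of_mem hx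
  have := w.length_support
  refine w.mem_successors.2
    ⟨_, List.getElem_mem (n := w.support.idxOf x - 1) (by rw [length_darts]; omega), ?_⟩
  rw [darts_getElem_eq_getVert]
  exact ⟨rfl, by simp only [Nat.sub_add_cancel hpos, getVert_support_idxOf _ hx]⟩

lemma count_support_dropLast_eq_count_tail (w : G.Walk u u) (x : V) :
    w.support.dropLast.count x = w.support.tail.count x := by
  have h₁ := congrArg (List.count x) (List.dropLast_append_getLast w.support_ne_nil)
  have h₂ := congrArg (List.count x) w.cons_tail_support
  rw [getLast_support, List.count_append] at h₁
  rw [List.count_cons] at h₂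
  simp only [List.count_singleton] at h₁
  omega

end Walk

end SimpleGraph

theorem kwalk_contains_k_plus_one_tree_general [DecidableEq V]
    (G : SimpleGraph V) (k : ℕ) (v : V) (w : G.Walk v v)
    (hw : IsKWalk w k) :
    ∃ T : SimpleGraph V, T ≤ G ∧ T.Connected ∧ T.IsAcyclic ∧
      MaxDegLE T (k + 1) ∧ T.edgeSet ⊆ {e | e ∈ w.edges} := by
  have hmem (x : V) : x ∈ w.support := List.mem_of_mem_tail (List.count_pos_iff.1 (hw x).1)
  have hrank (x : V) (hx : x ≠ v) :
      w.support.idxOf (w.firstVisitParent x) < w.support.idxOf x :=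
    w.idxOf_firstVisitParent_lt (hmem x) hx
  have hne_start (x : V) (hx : w.firstVisitParent x ≠ x) : x ≠ v := by
    rintro rfl
    exact hx w.firstVisitParent_start
  have hstep (x : V) (hx : w.firstVisitParent x ≠ x) :
      x ∈ w.successors (w.firstVisitParent x) :=
    w.mem_successors_firstVisitParent (hmem x) (hne_start x hx)
  have hedges : (parentGraph w.firstVisitParent).edgeSet ⊆ {e | e ∈ w.edges} :=
    parentGraph_edgeSet_subset fun x hx => w.mk_mem_edges_of_mem_successors (hstep x hx)
  refine ⟨parentGraph w.firstVisitParent,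
    edgeSet_subset_edgeSet.1 (hedges.trans w.edges_subset_edgeSet),
    parentGraph_connected (r := w.support.idxOf) hrank,
    parentGraph_isAcyclic (r := w.support.idxOf) fun x hx => hrank x (hne_start x hx),
    maxDegLE_parentGraph w.successors hstep fun x => ?_, hedges⟩
  calc (w.successors x).card ≤ w.support.dropLast.count x := w.card_successors_le x
    _ = w.support.tail.count x := w.count_support_dropLast_eq_count_tail x
    _ ≤ k := (hw x).2

/-- every `k`-walk contains a spanning tree of maximum degree at
most `k + 1`; in particular a 2-walk contains a 3-tree. -/
theorem kwalk_contains_k_plus_one_tree [Fintype V] [DecidableEq V]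
    (G : SimpleGraph V) (hG : G.Connected) (k : ℕ) (v : V) (w : G.Walk v v)
    (hw : IsKWalk w k) :
    ∃ T : SimpleGraph V, T ≤ G ∧ T.Connected ∧ T.IsAcyclic ∧
      MaxDegLE T (k + 1) ∧ T.edgeSet ⊆ {e | e ∈ w.edges} :=
  kwalk_contains_k_plus_one_tree_general G k v w hw
end

section
/- If a graph G contains two vertices s, t such that G − s − t has at least five components, then G has no spanning good cactus K with maximum degree at most three in which K − s − t would be required to have at least five components; more concretely: if K is a good cactus with maximum degree at most three and s, t ∈ V(K), then K − s − t has at most four components. -/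
open SimpleGraph

variable {V : Type*}

/-!
Every component of `K - s - t` contains a neighbour of `s` or of `t`, and each of `s`, `t`
meets at most three components. Suppose `s` meets three. Then its three neighbours avoid `t`,
so `s` is not adjacent to `t`, and since `s` lies in at most two blocks, two of its edges lie on a
common cycle `C`. The two neighbours of `s` on `C` are joined by `C - s`, so `t` must lie on `C`.
Every neighbour of `t` on `C` is then joined, along `C - s - t`, to one of those two neighbours,
and `t`, having two neighbours on `C` and degree at most three, has at most one neighbour off `C`:
together `s` and `t` meet at most `3 + 1` components. If neither meets three, there are at most
`2 + 2`.
-/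

namespace SimpleGraph

variable {G : SimpleGraph V} {D : Set V}

def adjComponents (G : SimpleGraph V) (D : Set V) (p : V) : Set (G.ComponentCompl D) :=
  {C | ∃ v ∈ C, G.Adj p v}

namespace ComponentCompl

theorem eq_of_mem_of_mem {C C' : G.ComponentCompl D} {v : V} (hC : v ∈ C) (hC' : v ∈ C') :
    C = C' := by
  obtain ⟨_, rfl⟩ := hC
  obtain ⟨_, rfl⟩ := hC'
  rfl

theorem mem_of_walk {C : G.ComponentCompl D} :
    ∀ {u w : V} (q : G.Walk u w), (∀ z ∈ q.support, z ∉ D) → u ∈ C → w ∈ C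
  | _, _, .nil, _, hu => hu
  | _, _, .cons h q, hq, hu =>
    mem_of_walk q (fun z hz => hq z (by simp [hz]))
      (mem_of_adj _ _ hu (hq _ (by simp)) h)

theorem ncard_le_of_forall_exists_mem {A : Set (G.ComponentCompl D)} {B : Set V}
    (hB : B.Finite) (h : ∀ C ∈ A, ∃ v ∈ B, v ∈ C) : A.ncard ≤ B.ncard := by
  rcases A.eq_empty_or_nonempty with rfl | ⟨C₀, -⟩
  · simp
  have : Nonempty V := let ⟨v, _⟩ := C₀.nonempty; ⟨v⟩
  choose! f hfB hfC using h
  exact Set.ncard_le_ncard_of_injOn f hfB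
    (fun C hC C' hC' hf => eq_of_mem_of_mem (hfC C hC) (hf ▸ hfC C' hC')) hB

theorem exists_mem_adjComponents (hG : G.Preconnected) (hD : D.Nonempty)
    (C : G.ComponentCompl D) : ∃ p ∈ D, C ∈ adjComponents G D p := by
  obtain ⟨⟨v, p⟩, hv, hp, hvp⟩ := exists_adj_boundary_pair hG hD C
  exact ⟨p, hp, v, hv, hvp.symm⟩

end ComponentCompl

theorem ncard_adjComponents_le [Finite V] (p : V) :
    (adjComponents G D p).ncard ≤ (G.neighborSet p \ D).ncard :=
  ComponentCompl.ncard_le_of_forall_exists_mem (Set.toFinite _)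
    fun _ ⟨v, hvC, hpv⟩ => ⟨v, ⟨hpv, ComponentCompl.notMem_of_mem hvC⟩, hvC⟩

namespace Walk

theorem IsPath.eq_of_mem_support_takeUntil_of_mem_support_dropUntil [DecidableEq V]
    {u v w z : V} {q : G.Walk u v} (hq : q.IsPath) (hw : w ∈ q.support)
    (h₁ : z ∈ (q.takeUntil w hw).support) (h₂ : z ∈ (q.dropUntil w hw).support) :
    z = w := by
  have hnd := hq.support_nodup
  rw [← q.take_spec hw, support_append] at hnd
  rw [← cons_tail_support] at h₂
  rcases List.mem_cons.mp h₂ with h | h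
  · exact h
  · exact ((List.nodup_append.mp hnd).2.2 z h₁ z h rfl).elim

theorem IsPath.mem_or_mem_of_mem_support {u v w o : V} {q : G.Walk u v} (hq : q.IsPath)
    (hqD : ∀ z ∈ q.support, z ≠ o → z ∉ D) (hw : w ∈ q.support) {C : G.ComponentCompl D}
    (hwC : w ∈ C) : u ∈ C ∨ v ∈ C := by
  classical
  by_cases ho : o ∈ (q.takeUntil w hw).support
  · right
    refine ComponentCompl.mem_of_walk (q.dropUntil w hw) (fun z hz => ?_) hwC
    by_cases hzo : z = o
    · subst hzo
      rw [hq.eq_of_mem_support_takeUntil_of_mem_support_dropUntil hw ho hz]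
      exact ComponentCompl.notMem_of_mem hwC
    · exact hqD z (q.support_dropUntil_subset_support hw hz) hzo
  · left
    refine ComponentCompl.mem_of_walk (q.takeUntil w hw).reverse (fun z hz => ?_) hwC
    rw [support_reverse, List.mem_reverse] at hz
    exact hqD z (q.support_takeUntil_subset_support hw hz) (fun h => ho (h ▸ hz))

theorem IsCycle.exists_isPath_support_tail_eq {v : V} {c : G.Walk v v} (hc : c.IsCycle) :
    ∃ (x y : V) (q : G.Walk x y), q.IsPath ∧ G.Adj v x ∧ G.Adj v y ∧ x ≠ y ∧
      v ∉ q.support ∧ c.support.tail = q.support ++ [v] := by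
  cases c with
  | nil => exact absurd rfl hc.ne_nil
  | cons hvx P =>
    have hP := ((cons_isCycle_iff P hvx).mp hc).1
    have hPn : ¬ P.Nil := fun hn => G.loopless.irrefl _ (hn.eq ▸ hvx)
    have hsupp : P.dropLast.support ++ [v] = P.support := support_dropLast_concat hPn
    have hnd : (P.dropLast.support ++ [v]).Nodup := hsupp ▸ hP.support_nodup
    refine ⟨_, _, P.dropLast, hP.dropLast, hvx, (P.adj_penultimate hPn).symm, ?_,
      fun h => (List.nodup_append.mp hnd).2.2 v h v (by simp) rfl, ?_⟩
    · simpa [penultimate_cons_of_not_nil _ _ hPn] using hc.snd_ne_penultimate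
    · rw [support_cons, List.tail_cons, hsupp]

theorem IsCycle.two_le_ncard_neighborSet_inter_support [Finite V] {u v : V} {c : G.Walk u u}
    (hc : c.IsCycle) (hv : v ∈ c.support) :
    2 ≤ (G.neighborSet v ∩ {w | w ∈ c.support}).ncard := by
  classical
  obtain ⟨x, y, q, -, hx, hy, hxy, -, hsupp⟩ := (hc.rotate hv).exists_isPath_support_tail_eq
  have hmem : ∀ w ∈ q.support, w ∈ c.support := fun w hw => by
    rw [← c.mem_support_rotate_iff v hv]
    exact List.mem_of_mem_tail (hsupp ▸ List.mem_append_left _ hw)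
  calc 2 = ({x, y} : Set V).ncard := (Set.ncard_pair hxy).symm
    _ ≤ _ := by
      refine Set.ncard_le_ncard (Set.pair_subset ?_ ?_) (Set.toFinite _)
      exacts [⟨hx, hmem x q.start_mem_support⟩, ⟨hy, hmem y q.end_mem_support⟩]

end Walk

theorem exists_isCycle_of_blockDegree_lt [Finite V] {v : V}
    (h : blockDegree G v < (G.neighborSet v).ncard) : ∃ c : G.Walk v v, c.IsCycle := by
  classical
  by_contra! hno
  refine h.not_ge (Set.ncard_le_ncard_of_injOn
    (fun a => {f ∈ G.edgeSet | SameBlock G s(v, a) f}) ?_ ?_ (Set.toFinite _))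
  · intro a ha
    exact ⟨⟨s(v, a), ha, rfl⟩, s(v, a), ⟨ha, Or.inl rfl⟩, Sym2.mem_mk_left _ _⟩
  · intro a _ b hb hab
    have hvb : s(v, b) ∈ {f ∈ G.edgeSet | SameBlock G s(v, a) f} :=
      (congrArg (s(v, b) ∈ ·) hab).mpr ⟨hb, Or.inl rfl⟩
    rcases hvb.2 with he | ⟨u, c, hc, hvc, -⟩
    · exact Sym2.congr_right.mp he
    · exact (hno _ (hc.rotate (c.fst_mem_support_of_mem_edges hvc))).elim

theorem ncard_adjComponents_lt_of_walk [Finite V] {p x y : V} (hx : x ∈ G.neighborSet p \ D)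
    (hy : y ∈ G.neighborSet p \ D) (hxy : x ≠ y) (q : G.Walk x y)
    (hq : ∀ z ∈ q.support, z ∉ D) :
    (adjComponents G D p).ncard < (G.neighborSet p \ D).ncard :=
  calc (adjComponents G D p).ncard ≤ ((G.neighborSet p \ D) \ {y}).ncard :=
        ComponentCompl.ncard_le_of_forall_exists_mem (Set.toFinite _) fun C ⟨v, hvC, hpv⟩ => by
          by_cases hvy : v = y
          · subst hvy
            exact ⟨x, ⟨hx, hxy⟩,
              ComponentCompl.mem_of_walk q.reverse (by simpa using hq) hvC⟩
          · exact ⟨v, ⟨⟨hpv, ComponentCompl.notMem_of_mem hvC⟩, hvy⟩, hvC⟩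
    _ < _ := Set.ncard_sdiff_singleton_lt_of_mem hy

theorem ncard_adjComponents_diff_le_one [Finite V] {p o : V} {c : G.Walk p p}
    (hc : c.IsCycle) (hdeg : (G.neighborSet o).ncard ≤ 3) (hp : p ∈ D) (ho : o ∈ c.support)
    (hcD : ∀ z ∈ c.support, z ≠ p → z ≠ o → z ∉ D) :
    (adjComponents G D o \ adjComponents G D p).ncard ≤ 1 := by
  obtain ⟨x, y, q, hq, hpx, hpy, -, hpq, hsupp⟩ := hc.exists_isPath_support_tail_eq
  have hmem : ∀ z ∈ c.support, z ≠ p → z ∈ q.support := fun z hz hzp => by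
    rw [← c.cons_tail_support, hsupp] at hz
    simpa [hzp] using hz
  have hqD : ∀ z ∈ q.support, z ≠ o → z ∉ D := fun z hz hzo =>
    hcD z (by rw [← c.cons_tail_support, hsupp]; simp [hz]) (fun h => hpq (h ▸ hz)) hzo
  have hoff : (G.neighborSet o \ {z | z ∈ c.support}).ncard ≤ 1 := by
    have := hc.two_le_ncard_neighborSet_inter_support ho
    have := Set.ncard_inter_add_ncard_sdiff_eq_ncard (G.neighborSet o) {z | z ∈ c.support}
    omega
  refine (ComponentCompl.ncard_le_of_forall_exists_mem (Set.toFinite _) ?_).trans hoff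
  rintro C ⟨⟨w, hwC, how⟩, hCp⟩
  refine ⟨w, ⟨how, fun hwc => hCp ?_⟩, hwC⟩
  have hwp : w ≠ p := fun h => ComponentCompl.notMem_of_mem hwC (h ▸ hp)
  rcases hq.mem_or_mem_of_mem_support hqD (hmem w hwc hwp) hwC with h | h
  exacts [⟨x, h, hpx⟩, ⟨y, h, hpy⟩]

theorem ncard_adjComponents_union_le_four_of_three_le [Finite V] {p o : V}
    (hbd : blockDegree G p ≤ 2) (hdeg : MaxDegLE G 3)
    (h3 : 3 ≤ (adjComponents G {p, o} p).ncard) :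
    (adjComponents G {p, o} p ∪ adjComponents G {p, o} o).ncard ≤ 4 := by
  have hdegp : (G.neighborSet p).ncard ≤ 3 := hdeg p
  have hN : (G.neighborSet p \ {p, o}).ncard = 3 :=
    le_antisymm ((Set.ncard_le_ncard Set.sdiff_subset).trans hdegp)
      (h3.trans (ncard_adjComponents_le p))
  have hpo : ¬ G.Adj p o := fun hpo => by
    have hsub : G.neighborSet p \ {p, o} ⊆ G.neighborSet p \ {o} :=
      Set.sdiff_subset_sdiff_right (Set.subset_insert p {o})
    have := (Set.ncard_le_ncard hsub).trans_eq (Set.ncard_sdiff_singleton_of_mem hpo)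
    omega
  have hnbr : ∀ z, G.Adj p z → z ∈ G.neighborSet p \ {p, o} := fun z hz =>
    ⟨hz, by rintro (rfl | rfl); exacts [G.loopless.irrefl _ hz, hpo hz]⟩
  obtain ⟨c, hc⟩ : ∃ c : G.Walk p p, c.IsCycle := exists_isCycle_of_blockDegree_lt <| by
    have := Set.ncard_le_ncard (Set.sdiff_subset (s := G.neighborSet p) (t := {p, o}))
    omega
  obtain ⟨x, y, q, -, hpx, hpy, hxy, hpq, hsupp⟩ := hc.exists_isPath_support_tail_eq
  have hcD : ∀ z ∈ c.support, z ≠ p → z ≠ o → z ∉ ({p, o} : Set V) := by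
    rintro z - hzp hzo (rfl | rfl) <;> contradiction
  by_cases hoc : o ∈ c.support
  · set Ap := adjComponents G {p, o} p
    set Ao := adjComponents G {p, o} o
    calc (Ap ∪ Ao).ncard = (Ap ∪ (Ao \ Ap)).ncard := by rw [Set.union_sdiff_self]
      _ ≤ 3 + 1 := (Set.ncard_union_le _ _).trans <| add_le_add
          ((ncard_adjComponents_le p).trans hN.le)
          (ncard_adjComponents_diff_le_one hc (hdeg o) (.inl rfl) hoc hcD)
  · have hqc : ∀ z ∈ q.support, z ∈ c.support := fun z hz => by
      rw [← c.cons_tail_support, hsupp]; simp [hz]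
    have := ncard_adjComponents_lt_of_walk (hnbr x hpx) (hnbr y hpy) hxy q fun z hz =>
      hcD z (hqc z hz) (fun h => hpq (h ▸ hz)) (fun h => hoc (h ▸ hqc z hz))
    omega

theorem ncard_adjComponents_union_le_four [Finite V] {s t : V} (hs : blockDegree G s ≤ 2)
    (ht : blockDegree G t ≤ 2) (hdeg : MaxDegLE G 3) :
    (adjComponents G {s, t} s ∪ adjComponents G {s, t} t).ncard ≤ 4 := by
  by_cases h3s : 3 ≤ (adjComponents G {s, t} s).ncard
  · exact ncard_adjComponents_union_le_four_of_three_le hs hdeg h3s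
  by_cases h3t : 3 ≤ (adjComponents G {s, t} t).ncard
  · rw [Set.pair_comm] at h3t ⊢
    rw [Set.union_comm]
    exact ncard_adjComponents_union_le_four_of_three_le ht hdeg h3t
  exact (Set.ncard_union_le _ _).trans (by omega)

end SimpleGraph

/-- deleting two vertices from a good cactus of maximum degree at
most three leaves at most four components. -/
theorem delete_two_at_most_four_components [Fintype V] (K : SimpleGraph V)
    (h1 : IsGoodCactus K) (h2 : MaxDegLE K 3) (s t : V) :
    numComponents (delete2 K s t) ≤ 4 := by
  obtain ⟨⟨hconn, -⟩, hbd⟩ := h1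
  have hcover : (Set.univ : Set (K.ComponentCompl {s, t})) ⊆
      adjComponents K {s, t} s ∪ adjComponents K {s, t} t := fun C _ => by
    obtain ⟨p, rfl | rfl, hC⟩ :=
      ComponentCompl.exists_mem_adjComponents hconn.preconnected ⟨s, .inl rfl⟩ C
    exacts [.inl hC, .inr hC]
  -- `delete2 K s t` induces on `{v | v ≠ s ∧ v ≠ t}`, equal but not defeq to `{s, t}ᶜ`.
  suffices ∀ S, S = ({s, t} : Set V)ᶜ → numComponents (K.induce S) ≤ 4 from
    this {v | v ≠ s ∧ v ≠ t} (by ext; simp)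
  rintro _ rfl
  exact (Set.ncard_le_ncard hcover).trans (ncard_adjComponents_union_le_four (hbd s) (hbd t) h2)
end
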